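/- Bailey pair #1 (shifted Slater A1): The sequences β_n = 1/(q;q)_{2n} and α_m defined by α_m = ((1 − q^{2m+1})/(1 − q)) · c_m, where c_m = q^{(2m²−m)/3} if m ≡ 0 (mod 3), c_m = −q^{(2m²−m)/3} if m ≡ 2 (mod 3), and c_m = 0 if m ≡ 1 (mod 3), form a Bailey pair with respect to base a = q. Equivalently, α̃_m := ((1−q)/(1−q^{2m+1})) α_m equals c_m for all m ≥ 0. -/

import Mathlib

/-!
Multiplying out, the Bailey relation reads
`∑_{t ≤ n} (1 - q^{2t+1}) c_t / ((q)_{n-t} (q)_{n+t+1}) = 1 / (q)_{2n}`, since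
`(1 - q) (q²;q)_m = (q)_{m+1}`. It is proved by creative telescoping in `n`: after rescaling level
`n + 1` by `(1 - q^{2n+1}) (1 - q^{2n+2})`, the differences `delta n t` of the summands of
consecutive levels have partial sums over `t < 3k + 2` with an explicit closed form `cert n k`
(the period `3` of `c` forces blocks of three terms), and `cert n n = 0`.

Extending `1 / (q)_m` by zero to negative `m` makes the recurrence `1/(q)_{m-1} = (1 - q^m)/(q)_m`
hold on all of `ℤ`, so the closed-form identities hold for all `n` and `k` without boundary cases;
each of them becomes a rational identity in `q`, `q^n` and `q^k`.
-/

open Finset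

noncomputable def qPoch (a q : ℂ) (n : ℕ) : ℂ :=
  ∏ t ∈ Finset.range n, (1 - a * q ^ t)

noncomputable def qPochInf (a q : ℂ) : ℂ :=
  ∏' t : ℕ, (1 - a * q ^ t)

def IsBaileyPair (q a : ℂ) (α β : ℕ → ℂ) : Prop :=
  ∀ n : ℕ, β n =
    ∑ t ∈ Finset.range (n + 1), α t / (qPoch q q (n - t) * qPoch (a * q) q (n + t))

theorem qPoch_succ (q : ℂ) (n : ℕ) : qPoch q q (n + 1) = qPoch q q n * (1 - q ^ (n + 1)) := by
  rw [qPoch, prod_range_succ, ← pow_succ', qPoch]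

theorem one_sub_mul_qPoch_mul_self (q : ℂ) (n : ℕ) :
    (1 - q) * qPoch (q * q) q n = qPoch q q (n + 1) := by
  simp only [qPoch, prod_range_succ', pow_zero, mul_one]
  rw [mul_comm]
  congr 1
  refine prod_congr rfl fun t _ => ?_
  ring

theorem pow_ne_one_of_norm_lt_one {𝕜 : Type*} [NormedDivisionRing 𝕜] {q : 𝕜} (hq : ‖q‖ < 1)
    {m : ℕ} (hm : 0 < m) : q ^ m ≠ 1 := fun h => by
  have := pow_lt_one₀ (norm_nonneg q) hq hm.ne'
  rw [← norm_pow, h, norm_one] at this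
  exact this.false

noncomputable def qPochInv (q : ℂ) (m : ℤ) : ℂ :=
  if 0 ≤ m then (qPoch q q m.toNat)⁻¹ else 0

section qPochInv

variable {q : ℂ}

theorem qPochInv_natCast (q : ℂ) (n : ℕ) : qPochInv q n = (qPoch q q n)⁻¹ := by
  simp [qPochInv]

theorem qPochInv_of_neg {m : ℤ} (hm : m < 0) : qPochInv q m = 0 := by
  simp [qPochInv, hm.not_ge]

variable (hq : ∀ m : ℕ, 0 < m → q ^ m ≠ 1)
include hq

theorem one_sub_pow_ne_zero {m : ℕ} (hm : 0 < m) : 1 - q ^ m ≠ 0 :=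
  sub_ne_zero.2 (hq m hm).symm

theorem qPochInv_sub_one (m : ℤ) : qPochInv q (m - 1) = (1 - q ^ m) * qPochInv q m := by
  rcases lt_trichotomy m 0 with hm | rfl | hm
  · rw [qPochInv_of_neg (by omega), qPochInv_of_neg hm, mul_zero]
  · simp [qPochInv_of_neg]
  · obtain ⟨n, rfl⟩ : ∃ n : ℕ, m = n + 1 := ⟨m.toNat - 1, by omega⟩
    rw [add_sub_cancel_right, show (n : ℤ) + 1 = (n + 1 : ℕ) by push_cast; rfl, zpow_natCast,
      qPochInv_natCast, qPochInv_natCast, qPoch_succ, mul_inv, mul_left_comm,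
      mul_inv_cancel₀ (one_sub_pow_ne_zero hq n.succ_pos), mul_one]

theorem qPochInv_natCast_eq_mul (m : ℕ) :
    qPochInv q m = (1 - q ^ (m + 1)) * qPochInv q (m + 1 : ℕ) := by
  have h := qPochInv_sub_one hq ((m + 1 : ℕ) : ℤ)
  rwa [zpow_natCast, Nat.cast_succ, add_sub_cancel_right, ← Nat.cast_succ] at h

-- `q ^ n / q ^ a` stands for `q ^ (n - a)`, also when `a > n`.
theorem qPochInv_natSub_succ (hq0 : q ≠ 0) (n a : ℕ) :
    qPochInv q (n - (a + 1)) = (1 - q ^ n / q ^ a) * qPochInv q (n - a) := by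
  rw [← zpow_natCast, ← zpow_natCast, ← zpow_sub₀ hq0, ← qPochInv_sub_one hq, sub_sub]

end qPochInv

namespace SlaterA1

variable {q : ℂ}

noncomputable def coeff (q : ℂ) (m : ℕ) : ℂ :=
  if m % 3 = 0 then q ^ ((2 * m ^ 2 - m) / 3)
  else if m % 3 = 2 then -q ^ ((2 * m ^ 2 - m) / 3) else 0

theorem coeff_zero : coeff q 0 = 1 := by simp [coeff]

theorem coeff_three_mul_add_one (k : ℕ) : coeff q (3 * k + 1) = 0 := by
  simp [coeff, Nat.add_mod]

theorem coeff_three_mul_add_two (k : ℕ) :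
    coeff q (3 * k + 2) = -q ^ (6 * k ^ 2 + 7 * k + 2) := by
  rw [coeff, if_neg (by omega), if_pos (by omega)]
  congr 2
  have : (3 * k + 2) ^ 2 = 9 * k ^ 2 + 12 * k + 4 := by ring
  omega

theorem coeff_three_mul_add_three (k : ℕ) :
    coeff q (3 * k + 3) = q ^ (6 * k ^ 2 + 11 * k + 5) := by
  rw [coeff, if_pos (by omega)]
  congr 1
  have : (3 * k + 3) ^ 2 = 9 * k ^ 2 + 18 * k + 9 := by ring
  omega

noncomputable def summand (q : ℂ) (n t : ℕ) : ℂ :=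
  (1 - q ^ (2 * t + 1)) * coeff q t * qPochInv q ((n : ℤ) - t) * qPochInv q (n + t + 1 : ℕ)

noncomputable def delta (q : ℂ) (n t : ℕ) : ℂ :=
  (1 - q ^ (2 * n + 1)) * (1 - q ^ (2 * n + 2)) * summand q (n + 1) t - summand q n t

noncomputable def cert (q : ℂ) (n k : ℕ) : ℂ :=
  qPochInv q ((n : ℤ) - (3 * k + 1 : ℕ)) * qPochInv q (n + 3 * k + 2 : ℕ) *
    (q ^ (n + 6 * k ^ 2 + 4 * k + 1) * (1 - q ^ (4 * k + 2)) +
      q ^ (2 * n + 6 * k ^ 2 + 5 * k + 2) * (1 - q ^ (2 * k + 1)))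

theorem summand_three_mul_add_one (n k : ℕ) : summand q n (3 * k + 1) = 0 := by
  rw [summand, coeff_three_mul_add_one, mul_zero, zero_mul, zero_mul]

theorem summand_of_lt {n t : ℕ} (h : n < t) : summand q n t = 0 := by
  rw [summand, qPochInv_of_neg (by omega), mul_zero, zero_mul]

theorem sum_range_summand_of_le {n N : ℕ} (h : n + 1 ≤ N) :
    ∑ t ∈ range N, summand q n t = ∑ t ∈ range (n + 1), summand q n t :=
  (sum_subset (range_subset_range.2 h) fun _ _ ht => summand_of_lt (by simpa using ht)).symm

theorem delta_three_mul_add_one (n k : ℕ) : delta q n (3 * k + 1) = 0 := by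
  rw [delta, summand_three_mul_add_one, summand_three_mul_add_one, mul_zero, sub_zero]

theorem cert_self (n : ℕ) : cert q n n = 0 := by
  rw [cert, qPochInv_of_neg (by omega), zero_mul, zero_mul]

theorem div_qPoch_mul_qPoch_eq_summand {n t : ℕ} (ht : t ≤ n) :
    (1 - q ^ (2 * t + 1)) / (1 - q) * coeff q t / (qPoch q q (n - t) * qPoch (q * q) q (n + t)) =
      summand q n t := by
  rw [summand, ← Nat.cast_sub ht, qPochInv_natCast, qPochInv_natCast,
    ← one_sub_mul_qPoch_mul_self]
  simp only [div_eq_mul_inv, mul_inv]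
  ring

section Telescoping

variable (hq : ∀ m : ℕ, 0 < m → q ^ m ≠ 1)
include hq

theorem delta_zero (n : ℕ) : delta q n 0 = cert q n 0 := by
  have l := qPochInv_sub_one hq n
  have h0 := qPochInv_natCast_eq_mul hq n
  have h1 := qPochInv_natCast_eq_mul hq (n + 1)
  rw [zpow_natCast] at l
  simp only [cert, delta, summand, coeff_zero]
  push_cast at h0 h1 ⊢
  ring_nf at l h0 h1 ⊢
  rw [l, h0, h1]
  ring

theorem cert_succ (hq0 : q ≠ 0) (n k : ℕ) :
    cert q n (k + 1) = cert q n k + delta q n (3 * k + 2) + delta q n (3 * k + 3) := by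
  have l1 := qPochInv_natSub_succ hq hq0 n (3 * k + 1)
  have l2 := qPochInv_natSub_succ hq hq0 n (3 * k + 2)
  have l3 := qPochInv_natSub_succ hq hq0 n (3 * k + 3)
  have h2 := qPochInv_natCast_eq_mul hq (n + 3 * k + 2)
  have h3 := qPochInv_natCast_eq_mul hq (n + 3 * k + 3)
  have h4 := qPochInv_natCast_eq_mul hq (n + 3 * k + 4)
  have h5 := qPochInv_natCast_eq_mul hq (n + 3 * k + 5)
  simp only [cert, delta, summand, coeff_three_mul_add_two, coeff_three_mul_add_three]
  push_cast at l1 l2 l3 h2 h3 h4 h5 ⊢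
  ring_nf at l1 l2 l3 h2 h3 h4 h5 ⊢
  rw [l3, l2, l1, h2, h3, h4, h5]
  simp only [inv_pow]
  field_simp
  ring

theorem sum_range_delta (hq0 : q ≠ 0) (n k : ℕ) :
    ∑ t ∈ range (3 * k + 2), delta q n t = cert q n k := by
  induction k with
  | zero => simpa [sum_range_succ, delta_zero hq] using delta_three_mul_add_one (q := q) n 0
  | succ k ih =>
    rw [show 3 * (k + 1) + 2 = 3 * k + 2 + 1 + 1 + 1 by ring, sum_range_succ, sum_range_succ,
      sum_range_succ, ih, cert_succ hq hq0, show 3 * k + 2 + 1 + 1 = 3 * (k + 1) + 1 by ring,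
      delta_three_mul_add_one, add_zero]

theorem sum_range_summand (hq0 : q ≠ 0) (n : ℕ) :
    ∑ t ∈ range (n + 1), summand q n t = qPochInv q (2 * n : ℕ) := by
  induction n with
  | zero =>
    have h := qPochInv_natCast_eq_mul hq 0
    have h0 : qPochInv q 0 = 1 := by simp [qPochInv, qPoch]
    simp only [zero_add, sum_range_one, summand, coeff_zero]
    push_cast at h ⊢
    rw [h0] at h ⊢
    linear_combination -h
  | succ n ih =>
    have hP : (1 - q ^ (2 * n + 1)) * (1 - q ^ (2 * n + 2)) ≠ 0 :=
      mul_ne_zero (one_sub_pow_ne_zero hq (by omega)) (one_sub_pow_ne_zero hq (by omega))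
    have hsum := sum_range_delta hq hq0 n n
    simp only [delta] at hsum
    rw [cert_self, sum_sub_distrib, ← mul_sum,
      sum_range_summand_of_le (show n + 1 ≤ 3 * n + 2 by omega),
      sum_range_summand_of_le (show n + 1 + 1 ≤ 3 * n + 2 by omega), ih, sub_eq_zero] at hsum
    apply mul_left_cancel₀ hP
    rw [hsum, qPochInv_natCast_eq_mul hq, qPochInv_natCast_eq_mul hq (2 * n + 1),
      show 2 * (n + 1) = 2 * n + 1 + 1 by ring]
    ring

end Telescoping

end SlaterA1

theorem bailey_pair_1 (q : ℂ) (hq0 : 0 < ‖q‖) (hq1 : ‖q‖ < 1) :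
    (IsBaileyPair q q
      (fun m => (1 - q ^ (2 * m + 1)) / (1 - q) *
        (if m % 3 = 0 then q ^ ((2 * m ^ 2 - m) / 3)
          else if m % 3 = 2 then -q ^ ((2 * m ^ 2 - m) / 3) else 0))
      (fun n => 1 / qPoch q q (2 * n))) ∧
    (∀ m : ℕ,
      (1 - q) / (1 - q ^ (2 * m + 1)) *
        ((1 - q ^ (2 * m + 1)) / (1 - q) *
          (if m % 3 = 0 then q ^ ((2 * m ^ 2 - m) / 3)
            else if m % 3 = 2 then -q ^ ((2 * m ^ 2 - m) / 3) else 0)) =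
      (if m % 3 = 0 then q ^ ((2 * m ^ 2 - m) / 3)
        else if m % 3 = 2 then -q ^ ((2 * m ^ 2 - m) / 3) else 0)) := by
  have hq : ∀ m : ℕ, 0 < m → q ^ m ≠ 1 := fun _ => pow_ne_one_of_norm_lt_one hq1
  refine ⟨fun n => ?_, fun m => ?_⟩
  · dsimp only
    rw [one_div, ← qPochInv_natCast, ← SlaterA1.sum_range_summand hq (norm_pos_iff.1 hq0) n]
    exact sum_congr rfl fun t ht =>
      (SlaterA1.div_qPoch_mul_qPoch_eq_summand (Nat.lt_succ_iff.1 (mem_range.1 ht))).symm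
  · have h1 := one_sub_pow_ne_zero hq one_pos
    have h2 := one_sub_pow_ne_zero hq (Nat.succ_pos (2 * m))
    rw [pow_one] at h1
    field_simp
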